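/- arXiv:2204.02595 — 2 statements merged into one kernel-verified Lean document; each statement's English description precedes it below -/
import Mathlib

section
/- For every real number λ, every real number x and every integer k ≥ 0, the degenerate Bell polynomials satisfy the recurrence φ_{k+1,λ}(x) = x · Σ_{l=0}^{k} C(k,l) (1−λ)_{k−l,λ} φ_{l,λ}(x), where C(k,l) is the binomial coefficient. -/
open Finset

/-- Generalized falling factorial `(x)_{n,λ} = x(x-λ)⋯(x-(n-1)λ)`. -/
noncomputable def dfall (lam x : ℝ) (n : ℕ) : ℝ := ∏ i ∈ Finset.range n, (x - i * lam)

/-- Ordinary falling factorial `(x)_n = x(x-1)⋯(x-n+1)`. -/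
noncomputable def ffall (x : ℝ) (n : ℕ) : ℝ := ∏ i ∈ Finset.range n, (x - i)

/-- Degenerate Stirling numbers of the second kind, defined by the recurrence
`S_{2,λ}(0,0)=1`, `S_{2,λ}(n,k)=0` for `k>n` (and `k<0`), and
`S_{2,λ}(n+1,k) = S_{2,λ}(n,k-1) + (k-nλ) S_{2,λ}(n,k)`. -/
noncomputable def dStir (lam : ℝ) : ℕ → ℕ → ℝ
  | 0, 0 => 1
  | 0, _ + 1 => 0
  | n + 1, 0 => ((0 : ℝ) - n * lam) * dStir lam n 0
  | n + 1, k + 1 => dStir lam n k + (((k : ℝ) + 1) - n * lam) * dStir lam n (k + 1)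

/-- Degenerate Bell polynomials `φ_{n,λ}(x) = Σ_{k=0}^n S_{2,λ}(n,k) x^k`. -/
noncomputable def dBell (lam x : ℝ) (n : ℕ) : ℝ :=
  ∑ k ∈ Finset.range (n + 1), dStir lam n k * x ^ k
lemma dfall_succ (lam x : ℝ) (n : ℕ) :
    dfall lam x (n + 1) = dfall lam x n * (x - n * lam) := by
  simp [dfall, Finset.prod_range_succ]

lemma dStir_zero (lam : ℝ) (n : ℕ) : dStir lam (n + 1) 0 = 0 := by
  induction n with
  | zero => simp [dStir]
  | succ n ih =>
    conv_lhs => rw [dStir]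
    rw [ih, mul_zero]

lemma dStir_eq_zero_of_lt (lam : ℝ) : ∀ n k : ℕ, n < k → dStir lam n k = 0 := by
  intro n
  induction n with
  | zero =>
    intro k hk
    match k, hk with
    | j + 1, _ => simp [dStir]
  | succ n ih =>
    intro k hk
    match k, hk with
    | j + 1, hk =>
      have h1 : n < j := by omega
      have h2 : n < j + 1 := by omega
      simp [dStir, ih j h1, ih (j + 1) h2]

lemma dStir_zero_succ (lam : ℝ) (m : ℕ) : dStir lam 0 (m + 1) = 0 := by rw [dStir]

lemma dStir_succ_zero (lam : ℝ) (n : ℕ) :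
    dStir lam (n + 1) 0 = ((0 : ℝ) - n * lam) * dStir lam n 0 := by rw [dStir]

lemma dStir_succ_succ (lam : ℝ) (n k : ℕ) :
    dStir lam (n + 1) (k + 1)
      = dStir lam n k + (((k : ℝ) + 1) - n * lam) * dStir lam n (k + 1) := by rw [dStir]

lemma dStir_formula (lam : ℝ) (k : ℕ) : ∀ m : ℕ,
    dStir lam (k + 1) (m + 1)
      = ∑ l ∈ Finset.range (k + 1),
          (k.choose l : ℝ) * dfall lam (1 - lam) (k - l) * dStir lam l m := by
  induction k with
  | zero =>
    intro m
    cases m with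
    | zero => simp [dStir_succ_succ, dStir_zero_succ, dfall, dStir]
    | succ m => simp [dStir_succ_succ, dStir_zero_succ, dfall]
  | succ k ih =>
    intro m
    have key : ∑ l ∈ Finset.range (k + 2),
          ((k+1).choose l : ℝ) * dfall lam (1 - lam) (k + 1 - l) * dStir lam l m
        = ∑ l ∈ Finset.range (k + 1), (k.choose l : ℝ) *
            (dfall lam (1 - lam) (k + 1 - l) * dStir lam l m
              + dfall lam (1 - lam) (k - l) * dStir lam (l + 1) m) := by
      rw [Finset.sum_range_succ'
        (fun l => ((k+1).choose l : ℝ) * dfall lam (1 - lam) (k + 1 - l) * dStir lam l m)]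
      have h1 : ∀ i ∈ Finset.range (k + 1),
          (((k+1).choose (i+1) : ℝ)) * dfall lam (1 - lam) (k + 1 - (i + 1)) * dStir lam (i+1) m
          = (k.choose i : ℝ) * (dfall lam (1 - lam) (k - i) * dStir lam (i+1) m)
            + (k.choose (i+1) : ℝ) * dfall lam (1 - lam) (k - i) * dStir lam (i+1) m := by
        intro i _
        have : k + 1 - (i + 1) = k - i := by omega
        rw [this, Nat.choose_succ_succ]
        push_cast
        ring
      rw [Finset.sum_congr rfl h1, Finset.sum_add_distrib]
      have h2 : (∑ i ∈ Finset.range (k + 1),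
            (k.choose (i+1) : ℝ) * dfall lam (1 - lam) (k - i) * dStir lam (i+1) m)
          + ((k+1).choose 0 : ℝ) * dfall lam (1 - lam) (k + 1 - 0) * dStir lam 0 m
          = ∑ l ∈ Finset.range (k + 1),
              (k.choose l : ℝ) * (dfall lam (1 - lam) (k + 1 - l) * dStir lam l m) := by
        have h3 : ∑ l ∈ Finset.range (k + 2),
              (k.choose l : ℝ) * (dfall lam (1 - lam) (k + 1 - l) * dStir lam l m)
            = ∑ l ∈ Finset.range (k + 1),
              (k.choose l : ℝ) * (dfall lam (1 - lam) (k + 1 - l) * dStir lam l m) := by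
          rw [Finset.sum_range_succ, Nat.choose_succ_self]
          simp
        rw [← h3, Finset.sum_range_succ'
          (fun l => (k.choose l : ℝ) * (dfall lam (1 - lam) (k + 1 - l) * dStir lam l m))]
        simp only [Nat.choose_zero_right, Nat.cast_one, one_mul, Nat.sub_zero]
        congr 1
        refine Finset.sum_congr rfl fun i _ => ?_
        have : k + 1 - (i + 1) = k - i := by omega
        rw [this]
        ring
      rw [add_assoc, h2, ← Finset.sum_add_distrib]
      refine Finset.sum_congr rfl fun l _ => ?_
      ring
    rw [show k + 1 + 1 = k + 2 from rfl, key]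
    cases m with
    | zero =>
      rw [dStir_succ_succ, dStir_zero, ih 0, zero_add, Finset.mul_sum]
      refine Finset.sum_congr rfl fun l hl => ?_
      have hl' : l ≤ k := Nat.lt_succ_iff.mp (Finset.mem_range.mp hl)
      have h4 : k + 1 - l = (k - l) + 1 := by omega
      rw [h4, dfall_succ, dStir_succ_zero, Nat.cast_sub hl']
      push_cast
      ring
    | succ m =>
      rw [dStir_succ_succ, ih m, ih (m + 1), Finset.mul_sum, ← Finset.sum_add_distrib]
      refine Finset.sum_congr rfl fun l hl => ?_
      have hl' : l ≤ k := Nat.lt_succ_iff.mp (Finset.mem_range.mp hl)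
      have h4 : k + 1 - l = (k - l) + 1 := by omega
      rw [h4, dfall_succ, dStir_succ_succ, Nat.cast_sub hl']
      push_cast
      ring

/-- the degenerate Bell polynomials satisfy
`φ_{k+1,λ}(x) = x · Σ_{l=0}^{k} C(k,l) (1−λ)_{k−l,λ} φ_{l,λ}(x)`. -/
theorem dBell_recurrence (lam x : ℝ) (k : ℕ) :
    dBell lam x (k + 1)
      = x * ∑ l ∈ Finset.range (k + 1),
          (k.choose l : ℝ) * dfall lam (1 - lam) (k - l) * dBell lam x l := by
  have h0 : dBell lam x (k + 1)
      = ∑ m ∈ Finset.range (k + 1), dStir lam (k + 1) (m + 1) * x ^ (m + 1) := by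
    rw [dBell, Finset.sum_range_succ']
    simp [dStir_zero]
  rw [h0]
  have h1 : ∀ m ∈ Finset.range (k + 1), dStir lam (k + 1) (m + 1) * x ^ (m + 1)
      = x * ∑ l ∈ Finset.range (k + 1),
          (k.choose l : ℝ) * dfall lam (1 - lam) (k - l) * (dStir lam l m * x ^ m) := by
    intro m _
    rw [dStir_formula, Finset.sum_mul, Finset.mul_sum]
    refine Finset.sum_congr rfl fun l _ => ?_
    ring
  rw [Finset.sum_congr rfl h1, ← Finset.mul_sum, Finset.sum_comm]
  congr 1
  refine Finset.sum_congr rfl fun l hl => ?_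
  rw [← Finset.mul_sum]
  have hl' : l + 1 ≤ k + 1 := Finset.mem_range.mp hl
  have hsub : ∑ m ∈ Finset.range (l + 1), dStir lam l m * x ^ m
      = ∑ m ∈ Finset.range (k + 1), dStir lam l m * x ^ m := by
    refine Finset.sum_subset (Finset.range_subset_range.mpr hl') fun i hi hni => ?_
    have : l < i := by
      simp only [Finset.mem_range] at hi hni
      omega
    rw [dStir_eq_zero_of_lt lam l i this, zero_mul]
  rw [dBell, hsub]
end

section
/- Let λ ∈ ℝ and let L : ℝ[x] → ℝ[x] be the linear operator L(f) = x·f′ (multiplication by x composed with differentiation). Then for every integer n ≥ 1 and every polynomial f ∈ ℝ[x], the λ-falling-factorial composite operator satisfies (L)(L − λ·id)(L − 2λ·id)⋯(L − (n−1)λ·id)(f) = Σ_{k=0}^{n} S_{2,λ}(n,k) x^k f^{(k)}, where f^{(k)} is the k-th derivative of f. (This is the normal ordering identity (19)/(20) for degenerate integral powers of the number operator, realized with a = d/dx and a† = multiplication by x.) -/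
open Finset

/-- The number operator `L = a†a` realized on `ℝ[x]` with `a = d/dx` and
`a† = ` multiplication by `x`, i.e. `L(f) = x·f′`. -/
noncomputable def numOp : Module.End ℝ (Polynomial ℝ) :=
  (LinearMap.mulLeft ℝ (Polynomial.X : Polynomial ℝ)).comp
    (Polynomial.derivative : Polynomial ℝ →ₗ[ℝ] Polynomial ℝ)

/-- The degenerate `n`-th power `(L)(L − λ·id)(L − 2λ·id)⋯(L − (n−1)λ·id)` of the number
operator (the factors commute with one another). -/
noncomputable def numOpDPow (lam : ℝ) (n : ℕ) : Module.End ℝ (Polynomial ℝ) :=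
  ((List.range n).map fun i => numOp - ((i : ℝ) * lam) • 1).prod

open Polynomial

lemma dStir_eq_zero (lam : ℝ) : ∀ n k, n < k → dStir lam n k = 0 := by
  intro n
  induction n with
  | zero => intro k hk; match k, hk with
    | k + 1, _ => simp [dStir]
  | succ n ih =>
    intro k hk
    match k, hk with
    | k + 1, hk =>
      have h1 : n < k := by omega
      have h2 : n < k + 1 := by omega
      simp [dStir, ih k h1, ih (k+1) h2]

lemma deriv_iter_X_mul (k : ℕ) (f : Polynomial ℝ) :
    derivative^[k] (X * derivative f)
      = X * derivative^[k+1] f + C (k : ℝ) * derivative^[k] f := by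
  induction k with
  | zero => simp
  | succ k ih =>
    rw [Function.iterate_succ_apply', ih]
    rw [Function.iterate_succ_apply' derivative (k+1)]
    rw [Function.iterate_succ_apply' derivative k]
    simp only [derivative_add, derivative_mul, derivative_X, derivative_C, Nat.cast_succ, C_add, C_1]
    ring

lemma numOpDPow_succ (lam : ℝ) (n : ℕ) :
    numOpDPow lam (n + 1) = numOpDPow lam n * (numOp - ((n : ℝ) * lam) • 1) := by
  simp [numOpDPow, List.range_succ]

/-- the normal ordering of the degenerate `n`-th power of the number operator:
for `n ≥ 1` and any `f ∈ ℝ[x]`,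
`(L)(L − λ·id)⋯(L − (n−1)λ·id)(f) = Σ_{k=0}^{n} S_{2,λ}(n,k) x^k f^{(k)}`. -/
theorem numOpDPow_normal_ordering (lam : ℝ) (n : ℕ) (hn : 1 ≤ n) (f : Polynomial ℝ) :
    numOpDPow lam n f
      = ∑ k ∈ Finset.range (n + 1),
          Polynomial.C (dStir lam n k) * Polynomial.X ^ k
            * ((Polynomial.derivative (R := ℝ))^[k] f) := by
  induction n generalizing f with
  | zero => omega
  | succ n ih =>
    rcases Nat.eq_zero_or_pos n with h0 | hpos
    · subst h0
      have h1 : numOpDPow lam 1 f = X * derivative f := by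
        simp [numOpDPow, List.range_succ, numOp, LinearMap.mulLeft_apply]
      rw [h1]
      rw [Finset.sum_range_succ, Finset.sum_range_one]
      simp [dStir]
    · rw [numOpDPow_succ]
      rw [Module.End.mul_apply]
      have hg : (numOp - ((n : ℝ) * lam) • 1) f
          = X * derivative f - C ((n : ℝ) * lam) * f := by
        simp [numOp, LinearMap.mulLeft_apply, smul_eq_C_mul]
      rw [hg, ih hpos]
      -- abbreviations
      set A : ℕ → Polynomial ℝ := fun k =>
        C (dStir lam n k) * X ^ (k+1) * derivative^[k+1] f with hA
      set B : ℕ → Polynomial ℝ := fun k =>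
        C (((k : ℝ) - n * lam) * dStir lam n k) * X ^ k * derivative^[k] f with hB
      have key : ∀ k, C (dStir lam n k) * X ^ k
            * derivative^[k] (X * derivative f - C ((n : ℝ) * lam) * f)
          = A k + B k := by
        intro k
        have hd : derivative^[k] (X * derivative f - C ((n : ℝ) * lam) * f)
            = X * derivative^[k+1] f + C (k : ℝ) * derivative^[k] f
              - C ((n : ℝ) * lam) * derivative^[k] f := by
          rw [Polynomial.iterate_derivative_sub, Polynomial.iterate_derivative_C_mul,
            deriv_iter_X_mul]
        rw [hd, hA, hB]
        simp only [map_mul, map_sub]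
        ring
      rw [Finset.sum_congr rfl fun k _ => key k, Finset.sum_add_distrib]
      -- now RHS
      rw [Finset.sum_range_succ' _ (n + 1)]
      have t0 : C (dStir lam (n+1) 0) * X ^ 0 * derivative^[0] f = B 0 := by
        simp [dStir, hB]
      have tsucc : ∀ k, C (dStir lam (n+1) (k+1)) * X ^ (k+1) * derivative^[k+1] f
          = A k + B (k+1) := by
        intro k
        show C (dStir lam n k + (((k : ℝ) + 1) - n * lam) * dStir lam n (k+1)) * _ * _ = _
        rw [hA, hB]
        push_cast
        simp only [map_add, map_mul, map_sub, map_one]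
        ring
      rw [t0, Finset.sum_congr rfl fun k _ => tsucc k, Finset.sum_add_distrib]
      have hBn : B (n + 1) = 0 := by
        rw [hB]; simp [dStir_eq_zero lam n (n+1) (by omega)]
      have : ∑ k ∈ Finset.range (n+1), B (k+1) + B 0
          = ∑ k ∈ Finset.range (n+1), B k := by
        rw [← Finset.sum_range_succ' B (n+1), Finset.sum_range_succ, hBn, add_zero]
      linear_combination -this
end
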